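/- (Bach condition for aligned pure radiation) If g is a pure radiation metric with parallel rays spanned by K, then the Bach tensor B_{ab} = ∇^c A_{acb} + P^{dc} C_{dacb} satisfies B_{ab} X^a = 0 for every X orthogonal to K. -/

import Mathlib

/- A coordinate-chart framework for pseudo-Riemannian geometry on ℝⁿ:
metric, Christoffel symbols, covariant derivatives, curvature, Ricci,
Schouten, Weyl, Cotton and Bach tensors, and the standard tractor
connection, all written in index notation. -/

noncomputable section

open scoped BigOperators

/-- Points of the chart ℝⁿ. -/
abbrev Pt (n : ℕ) := Fin n → ℝ

/-- Partial derivative of a scalar function in the coordinate direction `a`. -/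
def pd {n : ℕ} (a : Fin n) (f : Pt n → ℝ) (x : Pt n) : ℝ :=
  fderiv ℝ f x (Pi.single a 1)

/-- A smooth vector field. -/
def SmoothVF {n : ℕ} (K : Pt n → Pt n) : Prop := ∀ b, ContDiff ℝ (⊤ : ℕ∞) (fun x => K x b)

/-- A smooth one-form. -/
def SmoothForm {n : ℕ} (f : Pt n → Fin n → ℝ) : Prop := ∀ b, ContDiff ℝ (⊤ : ℕ∞) (fun x => f x b)

/-- A pseudo-Riemannian metric (of arbitrary signature) in a global
coordinate chart on ℝⁿ, given by its components `g x a b`, together with the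
components `ginv` of its pointwise inverse. -/
structure MetricG (n : ℕ) where
  g : Pt n → Fin n → Fin n → ℝ
  ginv : Pt n → Fin n → Fin n → ℝ
  symm : ∀ x a b, g x a b = g x b a
  smooth : ∀ a b, ContDiff ℝ (⊤ : ℕ∞) (fun x => g x a b)
  inv_mul : ∀ x a c, (∑ b, ginv x a b * g x b c) = if a = c then (1:ℝ) else 0

namespace MetricG

variable {n : ℕ} (G : MetricG n)

/-- The inner product of two tangent vectors at `x`. -/
def ip (x : Pt n) (X Y : Pt n) : ℝ := ∑ a, ∑ b, G.g x a b * X a * Y b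

/-- Christoffel symbols Γ^c_{ab} of the Levi-Civita connection. -/
def Γ (c a b : Fin n) (x : Pt n) : ℝ :=
  (1/2) * ∑ d, G.ginv x c d *
    (pd a (fun y => G.g y d b) x + pd b (fun y => G.g y d a) x - pd d (fun y => G.g y a b) x)

/-- Covariant derivative (∇_a X)^b of a vector field. -/
def covVec (X : Pt n → Pt n) (a b : Fin n) (x : Pt n) : ℝ :=
  pd a (fun y => X y b) x + ∑ c, G.Γ b a c x * X x c

/-- Covariant derivative ∇_a ω_b of a one-form. -/
def cov1 (ω : Pt n → Fin n → ℝ) (a b : Fin n) (x : Pt n) : ℝ :=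
  pd a (fun y => ω y b) x - ∑ e, G.Γ e a b x * ω x e

/-- Covariant derivative ∇_a T_{bc} of a (0,2)-tensor field. -/
def cov2 (T : Pt n → Fin n → Fin n → ℝ) (a b c : Fin n) (x : Pt n) : ℝ :=
  pd a (fun y => T y b c) x - ∑ e, G.Γ e a b x * T x e c - ∑ e, G.Γ e a c x * T x b e

/-- Covariant derivative ∇_a T_{bcd} of a (0,3)-tensor field. -/
def cov3 (T : Pt n → Fin n → Fin n → Fin n → ℝ) (a b c d : Fin n) (x : Pt n) : ℝ :=
  pd a (fun y => T y b c d) x - ∑ e, G.Γ e a b x * T x e c d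
    - ∑ e, G.Γ e a c x * T x b e d - ∑ e, G.Γ e a d x * T x b c e

/-- Curvature tensor R_{ab}{}^c{}_d, with the convention
`(∇_a∇_b − ∇_b∇_a)X^c = R_{ab}{}^c{}_d X^d`. -/
def Riem (a b c d : Fin n) (x : Pt n) : ℝ :=
  pd a (fun y => G.Γ c b d y) x - pd b (fun y => G.Γ c a d y) x
    + ∑ e, (G.Γ c a e x * G.Γ e b d x - G.Γ c b e x * G.Γ e a d x)

/-- (4,0)-curvature tensor R_{abcd} = g_{ce} R_{ab}{}^e{}_d. -/
def Riem4 (a b c d : Fin n) (x : Pt n) : ℝ :=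
  ∑ e, G.g x c e * G.Riem a b e d x

/-- Ricci tensor R_{bd} = R_{cb}{}^c{}_d. -/
def Ricci (b d : Fin n) (x : Pt n) : ℝ := ∑ c, G.Riem c b c d x

/-- Scalar curvature R = g^{ab} R_{ab}. -/
def Scal (x : Pt n) : ℝ := ∑ a, ∑ b, G.ginv x a b * G.Ricci a b x

/-- Schouten tensor P_{ab} = (1/(n−2)) (R_{ab} − R/(2(n−1)) g_{ab}). -/
def Schouten (a b : Fin n) (x : Pt n) : ℝ :=
  (1 / ((n : ℝ) - 2)) * (G.Ricci a b x - G.Scal x / (2 * ((n : ℝ) - 1)) * G.g x a b)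

/-- Weyl tensor C_{abcd} = R_{abcd} − 2(g_{c[a}P_{b]d} + g_{d[b}P_{a]c}). -/
def Weyl (a b c d : Fin n) (x : Pt n) : ℝ :=
  G.Riem4 a b c d x -
    (G.g x c a * G.Schouten b d x - G.g x c b * G.Schouten a d x
      + G.g x d b * G.Schouten a c x - G.g x d a * G.Schouten b c x)

/-- Cotton tensor A_{abc} = ∇_b P_{ca} − ∇_c P_{ba} (= 2∇_{[b}P_{c]a}). -/
def Cotton (a b c : Fin n) (x : Pt n) : ℝ :=
  G.cov2 (fun y i j => G.Schouten i j y) b c a x - G.cov2 (fun y i j => G.Schouten i j y) c b a x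

/-- Bach tensor B_{ab} = ∇^c A_{acb} + P^{dc} C_{dacb}. -/
def Bach (a b : Fin n) (x : Pt n) : ℝ :=
  (∑ c, ∑ e, G.ginv x c e * G.cov3 (fun y i j k => G.Cotton i j k y) e a c b x)
    + ∑ d, ∑ c, (∑ i, ∑ j, G.ginv x d i * G.ginv x c j * G.Schouten i j x) * G.Weyl d a c b x

/-- `K` is a null vector field. -/
def IsNull (K : Pt n → Pt n) : Prop := ∀ x, G.ip x (K x) (K x) = 0

/-- Pure radiation condition: Ric(X,·) = 0 for every vector X orthogonal to K. -/
def PureRadiation (K : Pt n → Pt n) : Prop :=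
  ∀ x (X : Pt n), G.ip x (K x) X = 0 → ∀ b, (∑ a, G.Ricci a b x * X a) = 0

/-- Parallel rays condition: ∇_a K^b = f_a K^b. -/
def ParallelRays (K : Pt n → Pt n) (f : Pt n → Fin n → ℝ) : Prop :=
  ∀ x a b, G.covVec K a b x = f x a * K x b

/-- first (ℝ-) component of the tractor derivative of the tractor (ρ, X, σ):
∇_a ρ − P_{ab} X^b. -/
def trD0 (ρ : Pt n → ℝ) (X : Pt n → Pt n) (a : Fin n) (x : Pt n) : ℝ :=
  pd a ρ x - ∑ b, G.Schouten a b x * X x b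

/-- middle (TM-) component of the tractor derivative of the tractor (ρ, X, σ):
∇_a X^b + ρ δ_a{}^b + σ P_a{}^b. -/
def trD1 (ρ : Pt n → ℝ) (X : Pt n → Pt n) (σ : Pt n → ℝ) (a b : Fin n) (x : Pt n) : ℝ :=
  G.covVec X a b x + ρ x * (if a = b then (1:ℝ) else 0)
    + σ x * ∑ e, G.ginv x b e * G.Schouten a e x

/-- last (ℝ-) component of the tractor derivative of the tractor (ρ, X, σ):
∇_a σ − g_{ab} X^b. -/
def trD2 (X : Pt n → Pt n) (σ : Pt n → ℝ) (a : Fin n) (x : Pt n) : ℝ :=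
  pd a σ x - ∑ b, G.g x a b * X x b

end MetricG

/-! ### Auxiliary calculus lemmas -/

section Aux

variable {n : ℕ}

lemma pd_congr_nhds {f g : Pt n → ℝ} {x : Pt n} (h : f =ᶠ[nhds x] g) (a : Fin n) :
    pd a f x = pd a g x := by
  unfold pd; rw [h.fderiv_eq]

lemma pd_congr {f g : Pt n → ℝ} (h : ∀ y, f y = g y) (a : Fin n) (x : Pt n) :
    pd a f x = pd a g x := by
  have : f = g := funext h
  rw [this]

lemma pd_add {f g : Pt n → ℝ} {x : Pt n} (hf : DifferentiableAt ℝ f x)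
    (hg : DifferentiableAt ℝ g x) (a : Fin n) :
    pd a (fun y => f y + g y) x = pd a f x + pd a g x := by
  unfold pd; rw [fderiv_fun_add hf hg]; rfl

lemma pd_sub {f g : Pt n → ℝ} {x : Pt n} (hf : DifferentiableAt ℝ f x)
    (hg : DifferentiableAt ℝ g x) (a : Fin n) :
    pd a (fun y => f y - g y) x = pd a f x - pd a g x := by
  unfold pd; rw [fderiv_fun_sub hf hg]; rfl

lemma pd_mul {f g : Pt n → ℝ} {x : Pt n} (hf : DifferentiableAt ℝ f x)
    (hg : DifferentiableAt ℝ g x) (a : Fin n) :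
    pd a (fun y => f y * g y) x = pd a f x * g x + f x * pd a g x := by
  unfold pd; rw [fderiv_fun_mul hf hg]; simp; ring

lemma pd_sum {ι : Type*} (s : Finset ι) {F : ι → Pt n → ℝ} {x : Pt n}
    (h : ∀ i ∈ s, DifferentiableAt ℝ (F i) x) (a : Fin n) :
    pd a (fun y => ∑ i ∈ s, F i y) x = ∑ i ∈ s, pd a (F i) x := by
  unfold pd; rw [fderiv_fun_sum h]; simp

lemma contDiff_pd {f : Pt n → ℝ} (hf : ContDiff ℝ (⊤ : ℕ∞) f) (a : Fin n) :
    ContDiff ℝ (⊤ : ℕ∞) (fun x => pd a f x) := by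
  unfold pd
  exact (hf.fderiv_right (m := (⊤ : ℕ∞)) le_rfl).clm_apply contDiff_const

lemma contDiffAt_pd {f : Pt n → ℝ} {x : Pt n} (hf : ContDiffAt ℝ (⊤ : ℕ∞) f x) (a : Fin n) :
    ContDiffAt ℝ (⊤ : ℕ∞) (fun x => pd a f x) x := by
  unfold pd
  exact (hf.fderiv_right (m := (⊤ : ℕ∞)) le_rfl).clm_apply contDiffAt_const

/-- Symmetry of second derivatives. -/
lemma pd_pd_comm {f : Pt n → ℝ} (hf : ContDiff ℝ (⊤ : ℕ∞) f) (a b : Fin n) (x : Pt n) :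
    pd a (fun y => pd b f y) x = pd b (fun y => pd a f y) x := by
  have hsymm : IsSymmSndFDerivAt ℝ f x := by
    apply (hf.contDiffAt).isSymmSndFDerivAt
    rw [minSmoothness_of_isRCLikeNormedField]
    exact WithTop.coe_le_coe.mpr (le_top : (2 : ℕ∞) ≤ ⊤)
  have hd : ∀ y, DifferentiableAt ℝ (fderiv ℝ f) y := fun y =>
    (((hf.fderiv_right (m := (⊤ : ℕ∞)) le_rfl)).differentiable (by simp)) y
  have key : ∀ v w : Pt n, fderiv ℝ (fun y => fderiv ℝ f y w) x v
      = fderiv ℝ (fderiv ℝ f) x v w := by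
    intro v w
    rw [fderiv_clm_apply (hd x) (differentiableAt_const w)]
    simp
  unfold pd
  rw [key, key, hsymm]

end Aux

lemma contDiff_finset_prod {n : ℕ} {ι : Type*} (s : Finset ι) (F : ι → Pt n → ℝ)
    (h : ∀ i ∈ s, ContDiff ℝ (⊤ : ℕ∞) (F i)) : ContDiff ℝ (⊤ : ℕ∞) (fun x => ∏ i ∈ s, F i x) := by
  classical
  induction s using Finset.induction_on with
  | empty => simpa using contDiff_const
  | insert a s' hns ih =>
      simp only [Finset.prod_insert hns]
      exact (h a (Finset.mem_insert_self a s')).mul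
        (ih fun i hi => h i (Finset.mem_insert_of_mem hi))

lemma contDiff_det {n : ℕ} {M : Pt n → Matrix (Fin n) (Fin n) ℝ}
    (h : ∀ i j, ContDiff ℝ (⊤ : ℕ∞) fun x => M x i j) : ContDiff ℝ (⊤ : ℕ∞) (fun x => (M x).det) := by
  have : (fun x => (M x).det)
      = fun x => ∑ σ : Equiv.Perm (Fin n), ((Equiv.Perm.sign σ : ℤ) : ℝ) * ∏ i, M x (σ i) i := by
    funext x
    rw [Matrix.det_apply]
    refine Finset.sum_congr rfl fun s _ => ?_
    rcases Int.units_eq_one_or (Equiv.Perm.sign s) with h | h <;> simp [h]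
  rw [this]
  apply ContDiff.sum
  intro σ _
  exact contDiff_const.mul (contDiff_finset_prod _ _ fun i _ => h (σ i) i)

namespace MetricG

variable {n : ℕ} (G : MetricG n)

/-- The matrix of the metric at `x`. -/
def gM (x : Pt n) : Matrix (Fin n) (Fin n) ℝ := Matrix.of (G.g x)

/-- The matrix of the inverse metric at `x`. -/
def giM (x : Pt n) : Matrix (Fin n) (Fin n) ℝ := Matrix.of (G.ginv x)

lemma giM_mul_gM (x : Pt n) : G.giM x * G.gM x = 1 := by
  ext a c
  simp [Matrix.mul_apply, gM, giM, G.inv_mul x a c, Matrix.one_apply]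

lemma gM_mul_giM (x : Pt n) : G.gM x * G.giM x = 1 :=
  mul_eq_one_comm.mp (G.giM_mul_gM x)

lemma mul_ginv (x : Pt n) (a c : Fin n) :
    (∑ b, G.g x a b * G.ginv x b c) = if a = c then (1:ℝ) else 0 := by
  have := congrFun (congrFun (G.gM_mul_giM x) a) c
  simpa [Matrix.mul_apply, gM, giM, Matrix.one_apply] using this

open Matrix in
lemma ginv_symm (x : Pt n) (a b : Fin n) : G.ginv x a b = G.ginv x b a := by
  have hT : G.gM x * (G.giM x)ᵀ = 1 := by
    have := congrArg Matrix.transpose (G.giM_mul_gM x)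
    rw [Matrix.transpose_mul, Matrix.transpose_one] at this
    have hgT : (G.gM x)ᵀ = G.gM x := by
      ext i j; simp [Matrix.transpose_apply, gM, G.symm x j i]
    rwa [hgT] at this
  have : (G.giM x)ᵀ = G.giM x := by
    calc (G.giM x)ᵀ = 1 * (G.giM x)ᵀ := by rw [one_mul]
    _ = (G.giM x * G.gM x) * (G.giM x)ᵀ := by rw [G.giM_mul_gM]
    _ = G.giM x * (G.gM x * (G.giM x)ᵀ) := by rw [mul_assoc]
    _ = G.giM x := by rw [hT, mul_one]
  have := congrFun (congrFun this b) a
  simpa [Matrix.transpose_apply, giM] using this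

lemma giM_eq_inv (x : Pt n) : G.giM x = (G.gM x)⁻¹ :=
  (Matrix.inv_eq_left_inv (G.giM_mul_gM x)).symm

lemma det_gM_ne_zero (x : Pt n) : (G.gM x).det ≠ 0 := by
  have : IsUnit (G.gM x) := ⟨⟨_, _, G.gM_mul_giM x, G.giM_mul_gM x⟩, rfl⟩
  exact ((Matrix.isUnit_iff_isUnit_det _).mp this).ne_zero

lemma smooth_ginv (a b : Fin n) : ContDiff ℝ (⊤ : ℕ∞) (fun x => G.ginv x a b) := by
  have hadj : ContDiff ℝ (⊤ : ℕ∞) (fun x => (G.gM x).adjugate a b) := by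
    have : (fun x => (G.gM x).adjugate a b)
        = fun x => ((G.gM x).updateRow b (Pi.single a 1)).det := by
      funext x; rw [Matrix.adjugate_apply]
    rw [this]
    apply contDiff_det
    intro i j
    by_cases hib : i = b
    · subst hib; simp only [Matrix.updateRow_self]; exact contDiff_const
    · simp only [Matrix.updateRow_ne hib]; exact G.smooth i j
  have hdet : ContDiff ℝ (⊤ : ℕ∞) (fun x => (G.gM x).det) := contDiff_det (fun i j => G.smooth i j)
  have hinv : ContDiff ℝ (⊤ : ℕ∞) (fun x => ((G.gM x).det)⁻¹) :=
    hdet.inv (fun x => G.det_gM_ne_zero x)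
  have : (fun x => G.ginv x a b) = fun x => ((G.gM x).det)⁻¹ * (G.gM x).adjugate a b := by
    funext x
    have h1 : G.ginv x a b = (G.gM x)⁻¹ a b := by
      rw [← G.giM_eq_inv]; rfl
    rw [h1, Matrix.inv_def]
    simp [Ring.inverse_eq_inv']
  rw [this]
  exact hinv.mul hadj

end MetricG

namespace MetricG

variable {n : ℕ} (G : MetricG n)

lemma Γ_symm (c a b : Fin n) (x : Pt n) : G.Γ c a b x = G.Γ c b a x := by
  unfold Γ
  congr 1
  apply Finset.sum_congr rfl
  intro d _
  have h1 : pd d (fun y => G.g y a b) x = pd d (fun y => G.g y b a) x :=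
    pd_congr (fun y => G.symm y a b) d x
  rw [h1]; ring

lemma smooth_Γ (c a b : Fin n) : ContDiff ℝ (⊤ : ℕ∞) (fun x => G.Γ c a b x) := by
  unfold Γ
  refine contDiff_const.mul (ContDiff.sum ?_)
  intro d _
  exact (G.smooth_ginv c d).mul
    (((contDiff_pd (G.smooth d b) a).add (contDiff_pd (G.smooth d a) b)).sub
      (contDiff_pd (G.smooth a b) d))

/-- Lowered Christoffel symbol Γ_{cab} = g_{cm} Γ^m_{ab}. -/
def Γl (c a b : Fin n) (x : Pt n) : ℝ := ∑ m, G.g x c m * G.Γ m a b x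

lemma smooth_Γl (c a b : Fin n) : ContDiff ℝ (⊤ : ℕ∞) (fun x => G.Γl c a b x) := by
  unfold Γl
  exact ContDiff.sum fun m _ => (G.smooth c m).mul (G.smooth_Γ m a b)

lemma Γl_eq (c a b : Fin n) (x : Pt n) :
    G.Γl c a b x = (1/2) * (pd a (fun y => G.g y c b) x + pd b (fun y => G.g y c a) x
      - pd c (fun y => G.g y a b) x) := by
  unfold Γl Γ
  set T : Fin n → ℝ := fun d => pd a (fun y => G.g y d b) x + pd b (fun y => G.g y d a) x
      - pd d (fun y => G.g y a b) x with hT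
  calc (∑ m, G.g x c m * ((1/2) * ∑ d, G.ginv x m d * T d))
      = ∑ m, ∑ d, (1/2) * (G.g x c m * G.ginv x m d * T d) := by
        apply Finset.sum_congr rfl; intro m _
        simp only [Finset.mul_sum]
        apply Finset.sum_congr rfl; intro d _; ring
    _ = ∑ d, (∑ m, G.g x c m * G.ginv x m d) * ((1/2) * T d) := by
        rw [Finset.sum_comm]
        apply Finset.sum_congr rfl; intro d _
        rw [Finset.sum_mul]; apply Finset.sum_congr rfl; intro m _; ring
    _ = ∑ d, (if c = d then (1:ℝ) else 0) * ((1/2) * T d) := by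
        apply Finset.sum_congr rfl; intro d _; rw [G.mul_ginv x c d]
    _ = (1/2) * T c := by simp

/-- Metric compatibility: ∂_a g_{bc} = Γ_{bac} + Γ_{cab}. -/
lemma metric_compat (a b c : Fin n) (x : Pt n) :
    pd a (fun y => G.g y b c) x = G.Γl b a c x + G.Γl c a b x := by
  rw [G.Γl_eq b a c, G.Γl_eq c a b]
  have h1 : pd c (fun y => G.g y a b) x = pd c (fun y => G.g y b a) x :=
    pd_congr (fun y => G.symm y a b) c x
  have h2 : pd b (fun y => G.g y a c) x = pd b (fun y => G.g y c a) x :=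
    pd_congr (fun y => G.symm y a c) b x
  have h3 : pd a (fun y => G.g y c b) x = pd a (fun y => G.g y b c) x :=
    pd_congr (fun y => G.symm y c b) a x
  rw [h1, h2, h3]; ring

lemma smooth_Riem (a b c d : Fin n) : ContDiff ℝ (⊤ : ℕ∞) (fun x => G.Riem a b c d x) := by
  unfold Riem
  exact ((contDiff_pd (G.smooth_Γ c b d) a).sub (contDiff_pd (G.smooth_Γ c a d) b)).add
    (ContDiff.sum fun e _ => ((G.smooth_Γ c a e).mul (G.smooth_Γ e b d)).sub
      ((G.smooth_Γ c b e).mul (G.smooth_Γ e a d)))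

lemma smooth_Ricci (b d : Fin n) : ContDiff ℝ (⊤ : ℕ∞) (fun x => G.Ricci b d x) := by
  unfold Ricci
  exact ContDiff.sum fun c _ => G.smooth_Riem c b c d

lemma smooth_Scal : ContDiff ℝ (⊤ : ℕ∞) (fun x => G.Scal x) := by
  unfold Scal
  exact ContDiff.sum fun a _ => ContDiff.sum fun b _ => (G.smooth_ginv a b).mul (G.smooth_Ricci a b)

lemma smooth_Schouten (a b : Fin n) : ContDiff ℝ (⊤ : ℕ∞) (fun x => G.Schouten a b x) := by
  unfold Schouten
  exact contDiff_const.mul ((G.smooth_Ricci a b).sub ((G.smooth_Scal.div_const _).mul (G.smooth a b)))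

end MetricG


namespace MetricG

variable {n : ℕ} (G : MetricG n)

lemma diff_g (a b : Fin n) (x : Pt n) : DifferentiableAt ℝ (fun y => G.g y a b) x :=
  (G.smooth a b).differentiable (by simp) x

lemma diff_Γ (c a b : Fin n) (x : Pt n) : DifferentiableAt ℝ (fun y => G.Γ c a b y) x :=
  (G.smooth_Γ c a b).differentiable (by simp) x

lemma diff_Γl (c a b : Fin n) (x : Pt n) : DifferentiableAt ℝ (fun y => G.Γl c a b y) x :=
  (G.smooth_Γl c a b).differentiable (by simp) x

lemma pd_Γl (a c b d : Fin n) (x : Pt n) :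
    pd a (fun y => G.Γl c b d y) x
      = ∑ e, ((G.Γl c a e x + G.Γl e a c x) * G.Γ e b d x
          + G.g x c e * pd a (fun y => G.Γ e b d y) x) := by
  have h0 : pd a (fun y => G.Γl c b d y) x
      = pd a (fun y => ∑ e, G.g y c e * G.Γ e b d y) x := by
    apply pd_congr; intro y; rfl
  rw [h0, pd_sum _ (fun e _ => (G.diff_g c e x).fun_mul (G.diff_Γ e b d x))]
  apply Finset.sum_congr rfl
  intro e _
  rw [pd_mul (G.diff_g c e x) (G.diff_Γ e b d x), G.metric_compat a c e]

/-- The fully lowered curvature in terms of lowered Christoffel symbols. -/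
lemma Riem4_formula (a b c d : Fin n) (x : Pt n) :
    G.Riem4 a b c d x
      = pd a (fun y => G.Γl c b d y) x - pd b (fun y => G.Γl c a d y) x
        - ∑ e, G.Γl e a c x * G.Γ e b d x + ∑ e, G.Γl e b c x * G.Γ e a d x := by
  have h1 : ∑ e, G.g x c e * pd a (fun y => G.Γ e b d y) x
      = pd a (fun y => G.Γl c b d y) x
        - ∑ e, (G.Γl c a e x + G.Γl e a c x) * G.Γ e b d x := by
    rw [G.pd_Γl a c b d, Finset.sum_add_distrib]; ring
  have h2 : ∑ e, G.g x c e * pd b (fun y => G.Γ e a d y) x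
      = pd b (fun y => G.Γl c a d y) x
        - ∑ e, (G.Γl c b e x + G.Γl e b c x) * G.Γ e a d x := by
    rw [G.pd_Γl b c a d, Finset.sum_add_distrib]; ring
  have h3 : ∑ e, G.g x c e * (∑ f, (G.Γ e a f x * G.Γ f b d x - G.Γ e b f x * G.Γ f a d x))
      = ∑ f, (G.Γl c a f x * G.Γ f b d x - G.Γl c b f x * G.Γ f a d x) := by
    simp only [Finset.mul_sum]
    rw [Finset.sum_comm]
    apply Finset.sum_congr rfl
    intro f _
    unfold Γl
    rw [Finset.sum_mul, Finset.sum_mul, ← Finset.sum_sub_distrib]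
    apply Finset.sum_congr rfl
    intro e _; ring
  unfold Riem4 Riem
  calc ∑ e, G.g x c e * (pd a (fun y => G.Γ e b d y) x - pd b (fun y => G.Γ e a d y) x
        + ∑ f, (G.Γ e a f x * G.Γ f b d x - G.Γ e b f x * G.Γ f a d x))
      = (∑ e, G.g x c e * pd a (fun y => G.Γ e b d y) x)
        - (∑ e, G.g x c e * pd b (fun y => G.Γ e a d y) x)
        + ∑ e, G.g x c e * (∑ f, (G.Γ e a f x * G.Γ f b d x - G.Γ e b f x * G.Γ f a d x)) := by
        simp only [mul_add, mul_sub, Finset.sum_add_distrib, Finset.sum_sub_distrib]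
    _ = _ := by
        rw [h1, h2, h3]
        simp only [add_mul, sub_mul, Finset.sum_add_distrib, Finset.sum_sub_distrib]
        ring

end MetricG


namespace MetricG

variable {n : ℕ} (G : MetricG n)

lemma ΓlΓ_swap (a c b d : Fin n) (x : Pt n) :
    ∑ e, G.Γl e a c x * G.Γ e b d x = ∑ e, G.Γl e b d x * G.Γ e a c x := by
  unfold Γl
  simp only [Finset.sum_mul]
  rw [Finset.sum_comm]
  apply Finset.sum_congr rfl; intro e _
  apply Finset.sum_congr rfl; intro m _
  rw [G.symm x m e]; ring

/-- Antisymmetry of R4 in the last two slots. -/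
lemma Riem4_antisym_last (a b c d : Fin n) (x : Pt n) :
    G.Riem4 a b c d x = - G.Riem4 a b d c x := by
  have key : G.Riem4 a b c d x + G.Riem4 a b d c x = 0 := by
    rw [G.Riem4_formula a b c d x, G.Riem4_formula a b d c x]
    have h1 : pd a (fun y => G.Γl c b d y) x + pd a (fun y => G.Γl d b c y) x
        = pd a (fun y => pd b (fun z => G.g z c d) y) x := by
      rw [← pd_add (G.diff_Γl c b d x) (G.diff_Γl d b c x)]
      apply pd_congr; intro y; exact (G.metric_compat b c d y).symm
    have h2 : pd b (fun y => G.Γl c a d y) x + pd b (fun y => G.Γl d a c y) x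
        = pd b (fun y => pd a (fun z => G.g z c d) y) x := by
      rw [← pd_add (G.diff_Γl c a d x) (G.diff_Γl d a c x)]
      apply pd_congr; intro y; exact (G.metric_compat a c d y).symm
    have h0 : pd a (fun y => pd b (fun z => G.g z c d) y) x
        = pd b (fun y => pd a (fun z => G.g z c d) y) x :=
      pd_pd_comm (G.smooth c d) a b x
    have h3 := G.ΓlΓ_swap a c b d x
    have h4 := G.ΓlΓ_swap a d b c x
    linarith
  linarith [key]

/-- Antisymmetry of Riem in the first two slots. -/
lemma Riem_antisym_first (a b c d : Fin n) (x : Pt n) :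
    G.Riem a b c d x = - G.Riem b a c d x := by
  unfold Riem
  simp only [Finset.sum_sub_distrib]
  ring

lemma Riem4_antisym_first (a b c d : Fin n) (x : Pt n) :
    G.Riem4 a b c d x = - G.Riem4 b a c d x := by
  unfold Riem4
  rw [← Finset.sum_neg_distrib]
  apply Finset.sum_congr rfl; intro e _
  rw [G.Riem_antisym_first a b e d x]; ring

/-- First Bianchi identity for Riem. -/
lemma bianchi1 (a b c d : Fin n) (x : Pt n) :
    G.Riem a b c d x + G.Riem b d c a x + G.Riem d a c b x = 0 := by
  unfold Riem
  have e1 : pd a (fun y => G.Γ c b d y) x = pd a (fun y => G.Γ c d b y) x :=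
    pd_congr (fun y => G.Γ_symm c b d y) a x
  have e2 : pd b (fun y => G.Γ c a d y) x = pd b (fun y => G.Γ c d a y) x :=
    pd_congr (fun y => G.Γ_symm c a d y) b x
  have e3 : pd d (fun y => G.Γ c b a y) x = pd d (fun y => G.Γ c a b y) x :=
    pd_congr (fun y => G.Γ_symm c b a y) d x
  have hsum : (∑ e, (G.Γ c a e x * G.Γ e b d x - G.Γ c b e x * G.Γ e a d x))
      + (∑ e, (G.Γ c b e x * G.Γ e d a x - G.Γ c d e x * G.Γ e b a x))
      + (∑ e, (G.Γ c d e x * G.Γ e a b x - G.Γ c a e x * G.Γ e d b x)) = 0 := by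
    rw [← Finset.sum_add_distrib, ← Finset.sum_add_distrib]
    apply Finset.sum_eq_zero
    intro e _
    rw [G.Γ_symm e b d, G.Γ_symm e a d, G.Γ_symm e b a]
    ring
  linarith [e1, e2, e3, hsum]

/-- First Bianchi identity for Riem4. -/
lemma bianchi4 (a b c d : Fin n) (x : Pt n) :
    G.Riem4 a b c d x + G.Riem4 b d c a x + G.Riem4 d a c b x = 0 := by
  unfold Riem4
  rw [← Finset.sum_add_distrib, ← Finset.sum_add_distrib]
  apply Finset.sum_eq_zero
  intro e _
  have := G.bianchi1 a b e d x
  linear_combination G.g x c e * this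

/-- Pair symmetry of the lowered curvature tensor. -/
lemma Riem4_pair_symm (a b c d : Fin n) (x : Pt n) :
    G.Riem4 a b c d x = G.Riem4 c d a b x := by
  have B1 := G.bianchi4 a b d c x
  have B2 := G.bianchi4 b c a d x
  have B3 := G.bianchi4 c d b a x
  have B4 := G.bianchi4 d a c b x
  have f1 := G.Riem4_antisym_last a b d c x
  have f2 := G.Riem4_antisym_last b c a d x
  have f3 := G.Riem4_antisym_last c d b a x
  have f4 := G.Riem4_antisym_last d a c b x
  have g5a := G.Riem4_antisym_first d b a c x
  have g5b := G.Riem4_antisym_last b d a c x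
  have g6a := G.Riem4_antisym_first a c b d x
  have g6b := G.Riem4_antisym_last c a b d x
  linarith

end MetricG


namespace MetricG

variable {n : ℕ} (G : MetricG n)

section WithK

variable (K : Pt n → Pt n) (f : Pt n → Fin n → ℝ)

/-- Lowered vector field K♭. -/
def Kl (a : Fin n) (x : Pt n) : ℝ := ∑ c, G.g x a c * K x c

lemma smooth_Kl (hKs : SmoothVF K) (a : Fin n) : ContDiff ℝ (⊤ : ℕ∞) (fun x => G.Kl K a x) :=
  ContDiff.sum fun c _ => (G.smooth a c).mul (hKs c)

lemma raise_Kl (x : Pt n) (b : Fin n) : ∑ a, G.ginv x b a * G.Kl K a x = K x b := by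
  unfold Kl
  simp only [Finset.mul_sum]
  rw [Finset.sum_comm]
  have : ∀ c, ∑ a, G.ginv x b a * (G.g x a c * K x c)
      = (∑ a, G.ginv x b a * G.g x a c) * K x c := by
    intro c; rw [Finset.sum_mul]; apply Finset.sum_congr rfl; intro a _; ring
  calc ∑ c, ∑ a, G.ginv x b a * (G.g x a c * K x c)
      = ∑ c, (if b = c then (1:ℝ) else 0) * K x c := by
        apply Finset.sum_congr rfl; intro c _; rw [this c, G.inv_mul x b c]
    _ = K x b := by simp

lemma ip_eq_sum_Kl (x : Pt n) (X : Pt n) : G.ip x (K x) X = ∑ b, G.Kl K b x * X b := by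
  unfold ip Kl
  rw [Finset.sum_comm]
  apply Finset.sum_congr rfl; intro b _
  rw [Finset.sum_mul]
  apply Finset.sum_congr rfl; intro a _
  rw [G.symm x b a]

lemma Kl_ne_zero (hK0 : ∀ x, K x ≠ 0) (x : Pt n) : ∃ i, G.Kl K i x ≠ 0 := by
  by_contra h
  push_neg at h
  apply hK0 x
  funext b
  have := G.raise_Kl K x b
  simp only [h, mul_zero, Finset.sum_const_zero] at this
  simp [← this]

variable (hray : G.ParallelRays K f)

lemma pdK (hray : G.ParallelRays K f) (a c : Fin n) (x : Pt n) :
    pd a (fun y => K y c) x = f x a * K x c - ∑ m, G.Γ c a m x * K x m := by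
  have := hray x a c
  unfold covVec at this
  linarith

lemma sum_ΓK_eq (hray : G.ParallelRays K f) (b c : Fin n) (y : Pt n) :
    ∑ d, G.Γ c b d y * K y d = f y b * K y c - pd b (fun z => K z c) y := by
  have := G.pdK K f hray b c y
  linarith

/-- ∇_a K♭_b = f_a K♭_b. -/
lemma cov1_Kl (hKs : SmoothVF K) (hray : G.ParallelRays K f) (a b : Fin n) (x : Pt n) :
    G.cov1 (fun y e => G.Kl K e y) a b x = f x a * G.Kl K b x := by
  unfold cov1
  have h0 : pd a (fun y => G.Kl K b y) x = pd a (fun y => ∑ c, G.g y b c * K y c) x := by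
    apply pd_congr; intro y; rfl
  have h1 : pd a (fun y => ∑ c, G.g y b c * K y c) x
      = ∑ c, (pd a (fun y => G.g y b c) x * K x c + G.g x b c * pd a (fun y => K y c) x) := by
    rw [pd_sum _ (fun c _ => (G.diff_g b c x).fun_mul ((hKs c).differentiable (by simp) x))]
    apply Finset.sum_congr rfl; intro c _
    rw [pd_mul (G.diff_g b c x) ((hKs c).differentiable (by simp) x)]
  have h2 : ∑ c, (pd a (fun y => G.g y b c) x * K x c + G.g x b c * pd a (fun y => K y c) x)
      = f x a * G.Kl K b x + ∑ c, G.Γl c a b x * K x c := by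
    have key : ∀ c, pd a (fun y => G.g y b c) x * K x c + G.g x b c * pd a (fun y => K y c) x
        = (G.Γl b a c x + G.Γl c a b x) * K x c
          + G.g x b c * (f x a * K x c - ∑ m, G.Γ c a m x * K x m) := by
      intro c
      rw [G.metric_compat a b c x, G.pdK K f hray a c x]
    rw [Finset.sum_congr rfl fun c _ => key c]
    have e1 : ∑ c, G.Γl b a c x * K x c = ∑ c, ∑ m, G.g x b m * G.Γ m a c x * K x c := by
      apply Finset.sum_congr rfl; intro c _
      unfold Γl; rw [Finset.sum_mul]
    have e2 : ∑ c, G.g x b c * (∑ m, G.Γ c a m x * K x m)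
        = ∑ c, ∑ m, G.g x b m * G.Γ m a c x * K x c := by
      rw [Finset.sum_comm]
      apply Finset.sum_congr rfl; intro c _
      rw [Finset.mul_sum]
      apply Finset.sum_congr rfl; intro m _; ring
    have e4 : ∑ c, G.g x b c * (f x a * K x c - ∑ m, G.Γ c a m x * K x m)
        = f x a * G.Kl K b x - ∑ c, G.g x b c * (∑ m, G.Γ c a m x * K x m) := by
      simp only [mul_sub, Finset.sum_sub_distrib]
      congr 1
      unfold Kl
      rw [Finset.mul_sum]
      apply Finset.sum_congr rfl; intro c _; ring
    simp only [add_mul, Finset.sum_add_distrib]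
    rw [e4]
    linarith [e1, e2]
  have e3 : ∑ e, G.Γ e a b x * G.Kl K e x = ∑ c, G.Γl c a b x * K x c := by
    unfold Kl Γl
    simp only [Finset.mul_sum, Finset.sum_mul]
    rw [Finset.sum_comm]
    apply Finset.sum_congr rfl; intro c _
    apply Finset.sum_congr rfl; intro e _
    rw [G.symm x e c]; ring
  rw [h0, h1, h2]
  linarith [e3]

/-- The curvature applied to K: R_{ab}{}^c{}_d K^d = (∂_a f_b − ∂_b f_a) K^c. -/
lemma RiemK (hKs : SmoothVF K) (hfs : SmoothForm f) (hray : G.ParallelRays K f)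
    (a b c : Fin n) (x : Pt n) :
    ∑ d, G.Riem a b c d x * K x d
      = (pd a (fun y => f y b) x - pd b (fun y => f y a) x) * K x c := by
  have diffK : ∀ d (y : Pt n), DifferentiableAt ℝ (fun z => K z d) y :=
    fun d y => (hKs d).differentiable (by simp) y
  have difff : ∀ d (y : Pt n), DifferentiableAt ℝ (fun z => f z d) y :=
    fun d y => (hfs d).differentiable (by simp) y
  have diffpdK : ∀ e d (y : Pt n), DifferentiableAt ℝ (fun z => pd e (fun w => K w d) z) y :=
    fun e d y => (contDiff_pd (hKs d) e).differentiable (by simp) y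
  -- generic computation of ∑_d ∂_p(Γ^c_{qd}) K^d
  have HGen : ∀ p q : Fin n, ∑ d, pd p (fun y => G.Γ c q d y) x * K x d
      = (pd p (fun y => f y q) x * K x c + f x q * pd p (fun y => K y c) x)
        - pd p (fun y => pd q (fun z => K z c) y) x
        - ∑ d, G.Γ c q d x * pd p (fun y => K y d) x := by
    intro p q
    have h1 : pd p (fun y => ∑ d, G.Γ c q d y * K y d) x
        = ∑ d, (pd p (fun y => G.Γ c q d y) x * K x d
            + G.Γ c q d x * pd p (fun y => K y d) x) := by
      rw [pd_sum _ (fun d _ => (G.diff_Γ c q d x).fun_mul (diffK d x))]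
      apply Finset.sum_congr rfl; intro d _
      rw [pd_mul (G.diff_Γ c q d x) (diffK d x)]
    have h2 : pd p (fun y => ∑ d, G.Γ c q d y * K y d) x
        = pd p (fun y => f y q * K y c - pd q (fun z => K z c) y) x :=
      pd_congr (fun y => G.sum_ΓK_eq K f hray q c y) p x
    have h3 : pd p (fun y => f y q * K y c - pd q (fun z => K z c) y) x
        = pd p (fun y => f y q) x * K x c + f x q * pd p (fun y => K y c) x
          - pd p (fun y => pd q (fun z => K z c) y) x := by
      rw [pd_sub ((difff q x).fun_mul (diffK c x)) (diffpdK q c x),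
        pd_mul (difff q x) (diffK c x)]
    rw [h2, h3] at h1
    rw [Finset.sum_add_distrib] at h1
    linarith
  have HA := HGen a b
  have HB := HGen b a
  -- the ΓΓ part
  have HC : ∑ d, (∑ e, (G.Γ c a e x * G.Γ e b d x - G.Γ c b e x * G.Γ e a d x)) * K x d
      = f x b * (∑ e, G.Γ c a e x * K x e)
        - (∑ e, G.Γ c a e x * pd b (fun y => K y e) x)
        - f x a * (∑ e, G.Γ c b e x * K x e)
        + (∑ e, G.Γ c b e x * pd a (fun y => K y e) x) := by
    have step1 : ∑ d, (∑ e, (G.Γ c a e x * G.Γ e b d x - G.Γ c b e x * G.Γ e a d x)) * K x d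
        = ∑ e, (G.Γ c a e x * (∑ d, G.Γ e b d x * K x d)
            - G.Γ c b e x * (∑ d, G.Γ e a d x * K x d)) := by
      have u1 : ∑ d, ∑ e, G.Γ c a e x * G.Γ e b d x * K x d
          = ∑ e, G.Γ c a e x * ∑ d, G.Γ e b d x * K x d := by
        rw [Finset.sum_comm]
        apply Finset.sum_congr rfl; intro e _
        rw [Finset.mul_sum]
        apply Finset.sum_congr rfl; intro d _; ring
      have u2 : ∑ d, ∑ e, G.Γ c b e x * G.Γ e a d x * K x d
          = ∑ e, G.Γ c b e x * ∑ d, G.Γ e a d x * K x d := by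
        rw [Finset.sum_comm]
        apply Finset.sum_congr rfl; intro e _
        rw [Finset.mul_sum]
        apply Finset.sum_congr rfl; intro d _; ring
      simp only [Finset.sum_mul, sub_mul, Finset.sum_sub_distrib]
      rw [u1, u2]
    rw [step1]
    have step2 : ∀ e, G.Γ c a e x * (∑ d, G.Γ e b d x * K x d)
          - G.Γ c b e x * (∑ d, G.Γ e a d x * K x d)
        = G.Γ c a e x * (f x b * K x e - pd b (fun z => K z e) x)
          - G.Γ c b e x * (f x a * K x e - pd a (fun z => K z e) x) := by
      intro e
      rw [G.sum_ΓK_eq K f hray b e x, G.sum_ΓK_eq K f hray a e x]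
    rw [Finset.sum_congr rfl fun e _ => step2 e]
    have r1 : ∑ e, G.Γ c a e x * (f x b * K x e)
        = f x b * ∑ e, G.Γ c a e x * K x e := by
      rw [Finset.mul_sum]; apply Finset.sum_congr rfl; intro e _; ring
    have r2 : ∑ e, G.Γ c b e x * (f x a * K x e)
        = f x a * ∑ e, G.Γ c b e x * K x e := by
      rw [Finset.mul_sum]; apply Finset.sum_congr rfl; intro e _; ring
    simp only [mul_sub, Finset.sum_sub_distrib]
    rw [r1, r2]
    ring
  have split : ∑ d, G.Riem a b c d x * K x d
      = (∑ d, pd a (fun y => G.Γ c b d y) x * K x d)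
        - (∑ d, pd b (fun y => G.Γ c a d y) x * K x d)
        + ∑ d, (∑ e, (G.Γ c a e x * G.Γ e b d x - G.Γ c b e x * G.Γ e a d x)) * K x d := by
    unfold Riem
    simp only [add_mul, sub_mul, Finset.sum_add_distrib, Finset.sum_sub_distrib]
  have schwarz : pd a (fun y => pd b (fun z => K z c) y) x
      = pd b (fun y => pd a (fun z => K z c) y) x := pd_pd_comm (hKs c) a b x
  have hra := hray x a c
  have hrb := hray x b c
  unfold covVec at hra hrb
  rw [split, HA, HB, HC]
  linear_combination (f x b) * hra - (f x a) * hrb - schwarz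

end WithK

end MetricG


namespace MetricG

variable {n : ℕ} (G : MetricG n)

lemma Riem_eq_raise (a b c d : Fin n) (x : Pt n) :
    G.Riem a b c d x = ∑ e, G.ginv x c e * G.Riem4 a b e d x := by
  unfold Riem4
  calc G.Riem a b c d x
      = ∑ m, (if c = m then (1:ℝ) else 0) * G.Riem a b m d x := by simp
    _ = ∑ m, (∑ e, G.ginv x c e * G.g x e m) * G.Riem a b m d x := by
        apply Finset.sum_congr rfl; intro m _; rw [G.inv_mul x c m]
    _ = ∑ e, G.ginv x c e * ∑ m, G.g x e m * G.Riem a b m d x := by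
        simp only [Finset.sum_mul, Finset.mul_sum]
        rw [Finset.sum_comm]
        apply Finset.sum_congr rfl; intro e _
        apply Finset.sum_congr rfl; intro m _; ring

lemma Ricci_symm (b d : Fin n) (x : Pt n) : G.Ricci b d x = G.Ricci d b x := by
  unfold Ricci
  have h : ∀ p q : Fin n, ∑ c, G.Riem c p c q x
      = ∑ c, ∑ e, G.ginv x c e * G.Riem4 c p e q x := by
    intro p q
    exact Finset.sum_congr rfl fun c _ => G.Riem_eq_raise c p c q x
  rw [h b d, h d b]
  rw [Finset.sum_comm]
  apply Finset.sum_congr rfl; intro c _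
  apply Finset.sum_congr rfl; intro e _
  rw [G.ginv_symm x e c, G.Riem4_pair_symm e b c d x]

section WithK

variable (K : Pt n → Pt n)

/-- Pointwise structure of Ricci for aligned pure radiation. -/
lemma Ricci_rad (hK0 : ∀ x, K x ≠ 0) (hpr : G.PureRadiation K) (x : Pt n)
    {i : Fin n} (hi : G.Kl K i x ≠ 0) (a b : Fin n) :
    G.Ricci a b x = (G.Ricci i i x / (G.Kl K i x)^2) * G.Kl K a x * G.Kl K b x := by
  have step1 : ∀ p q : Fin n, G.Ricci p q x = G.Kl K p x / G.Kl K i x * G.Ricci i q x := by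
    intro p q
    set X : Pt n := fun m => (if m = p then (1:ℝ) else 0)
      - G.Kl K p x / G.Kl K i x * (if m = i then (1:ℝ) else 0) with hXdef
    have horth : G.ip x (K x) X = 0 := by
      rw [G.ip_eq_sum_Kl K x X]
      simp only [hXdef, mul_sub, Finset.sum_sub_distrib, mul_ite, mul_one, mul_zero,
        Finset.sum_ite_eq', Finset.mem_univ, if_true]
      field_simp
      ring
    have hq := hpr x X horth q
    simp only [hXdef, mul_sub, sub_mul, Finset.sum_sub_distrib, mul_ite, mul_one, mul_zero,
      ite_mul, zero_mul, Finset.sum_ite_eq', Finset.mem_univ, if_true] at hq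
    linarith
  have h2 := step1 a b
  have h3 : G.Ricci i b x = G.Ricci b i x := G.Ricci_symm i b x
  have h4 := step1 b i
  rw [h2, h3, h4]
  field_simp

lemma Scal_zero (hK0 : ∀ x, K x ≠ 0) (hnull : G.IsNull K) (hpr : G.PureRadiation K)
    (x : Pt n) : G.Scal x = 0 := by
  obtain ⟨i, hi⟩ := G.Kl_ne_zero K hK0 x
  set μ := G.Ricci i i x / (G.Kl K i x)^2 with hμ
  have hfac := G.Ricci_rad K hK0 hpr x hi
  have hn0 : ∑ b, G.Kl K b x * K x b = 0 := by
    rw [← G.ip_eq_sum_Kl K x (K x)]; exact hnull x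
  unfold Scal
  calc ∑ a, ∑ b, G.ginv x a b * G.Ricci a b x
      = ∑ b, (∑ a, G.ginv x b a * G.Kl K a x) * (μ * G.Kl K b x) := by
        rw [Finset.sum_comm]
        apply Finset.sum_congr rfl; intro b _
        rw [Finset.sum_mul]
        apply Finset.sum_congr rfl; intro a _
        rw [hfac a b, G.ginv_symm x a b]; ring
    _ = ∑ b, μ * (G.Kl K b x * K x b) := by
        apply Finset.sum_congr rfl; intro b _
        rw [G.raise_Kl K x b]; ring
    _ = 0 := by rw [← Finset.mul_sum, hn0, mul_zero]

/-- Pointwise structure of the Schouten tensor for aligned pure radiation. -/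
lemma Schouten_rad (hK0 : ∀ x, K x ≠ 0) (hnull : G.IsNull K)
    (hpr : G.PureRadiation K) (x : Pt n) {i : Fin n} (hi : G.Kl K i x ≠ 0) (a b : Fin n) :
    G.Schouten a b x = (G.Schouten i i x / (G.Kl K i x)^2) * G.Kl K a x * G.Kl K b x := by
  have hs := G.Scal_zero K hK0 hnull hpr x
  have hfac := G.Ricci_rad K hK0 hpr x hi
  unfold Schouten
  rw [hs, hfac a b, hfac i i]
  field_simp
  ring

variable (f : Pt n → Fin n → ℝ)

/-- the proportionality function P_{ab} = ψ K_a K_b, defined using a chart index `i`. -/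
def ψf (i : Fin n) : Pt n → ℝ := fun y => G.Schouten i i y / (G.Kl K i y)^2

/-- Components of ∇P on rays: ∇_p P_{qr} = (∂_p ψ + 2 ψ f_p) K_q K_r. -/
def Gff (i : Fin n) (p : Fin n) : Pt n → ℝ :=
  fun y => pd p (G.ψf K i) y + 2 * G.ψf K i y * f y p

/-- The Cotton potential: A_{aqr} = K_a H_{qr}. -/
def Hf (i : Fin n) (q r : Fin n) : Pt n → ℝ :=
  fun y => G.Gff K f i q y * G.Kl K r y - G.Gff K f i r y * G.Kl K q y

lemma contDiffAt_ψf (hKs : SmoothVF K) {i : Fin n} {x : Pt n} (hi : G.Kl K i x ≠ 0) :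
    ContDiffAt ℝ (⊤ : ℕ∞) (G.ψf K i) x := by
  apply ContDiffAt.div (G.smooth_Schouten i i).contDiffAt
    ((G.smooth_Kl K hKs i).pow 2).contDiffAt
  exact pow_ne_zero 2 hi

lemma diffAt_ψf (hKs : SmoothVF K) {i : Fin n} {x : Pt n} (hi : G.Kl K i x ≠ 0) :
    DifferentiableAt ℝ (G.ψf K i) x :=
  (G.contDiffAt_ψf K hKs hi).differentiableAt (by simp)

lemma diffAt_Gff (hKs : SmoothVF K) (hfs : SmoothForm f) {i : Fin n} {x : Pt n}
    (hi : G.Kl K i x ≠ 0) (p : Fin n) : DifferentiableAt ℝ (G.Gff K f i p) x := by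
  apply DifferentiableAt.add
  · exact ((contDiffAt_pd (G.contDiffAt_ψf K hKs hi) p)).differentiableAt (by simp)
  · exact (((G.contDiffAt_ψf K hKs hi).differentiableAt (by simp)).const_mul 2).mul
      ((hfs p).differentiable (by simp) x)

lemma diffAt_Hf (hKs : SmoothVF K) (hfs : SmoothForm f) {i : Fin n} {x : Pt n}
    (hi : G.Kl K i x ≠ 0) (q r : Fin n) : DifferentiableAt ℝ (G.Hf K f i q r) x := by
  apply DifferentiableAt.sub
  · exact (G.diffAt_Gff K f hKs hfs hi q).mul ((G.smooth_Kl K hKs r).differentiable (by simp) x)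
  · exact (G.diffAt_Gff K f hKs hfs hi r).mul ((G.smooth_Kl K hKs q).differentiable (by simp) x)

lemma pd_Kl (hKs : SmoothVF K) (hray : G.ParallelRays K f) (p q : Fin n) (x : Pt n) :
    pd p (fun y => G.Kl K q y) x = f x p * G.Kl K q x + ∑ e, G.Γ e p q x * G.Kl K e x := by
  have := G.cov1_Kl K f hKs hray p q x
  unfold cov1 at this
  linarith

/-- ∇_p P_{qr} = G_p K_q K_r at points where K♭_i ≠ 0. -/
lemma cov2_Schouten_at (hK0 : ∀ x, K x ≠ 0) (hnull : G.IsNull K) (hpr : G.PureRadiation K)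
    (hKs : SmoothVF K) (hray : G.ParallelRays K f)
    {i : Fin n} {x : Pt n} (hi : G.Kl K i x ≠ 0) (p q r : Fin n) :
    G.cov2 (fun y a b => G.Schouten a b y) p q r x
      = G.Gff K f i p x * G.Kl K q x * G.Kl K r x := by
  have hiU : ∀ᶠ y in nhds x, G.Kl K i y ≠ 0 :=
    ((G.smooth_Kl K hKs i).continuous.continuousAt).eventually_ne hi
  have hrad : ∀ a b : Fin n, ∀ᶠ y in nhds x,
      G.Schouten a b y = G.ψf K i y * G.Kl K a y * G.Kl K b y := by
    intro a b
    exact hiU.mono fun y hy => by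
      rw [G.Schouten_rad K hK0 hnull hpr y hy a b]; rfl
  have hrx : ∀ a b : Fin n, G.Schouten a b x = G.ψf K i x * G.Kl K a x * G.Kl K b x :=
    fun a b => (hrad a b).self_of_nhds
  have diffKl : ∀ q : Fin n, DifferentiableAt ℝ (fun y => G.Kl K q y) x :=
    fun q => (G.smooth_Kl K hKs q).differentiable (by simp) x
  unfold cov2
  have hpd : pd p (fun y => G.Schouten q r y) x
      = pd p (G.ψf K i) x * G.Kl K q x * G.Kl K r x
        + G.ψf K i x * pd p (fun y => G.Kl K q y) x * G.Kl K r x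
        + G.ψf K i x * G.Kl K q x * pd p (fun y => G.Kl K r y) x := by
    have h0 : pd p (fun y => G.Schouten q r y) x
        = pd p (fun y => G.ψf K i y * G.Kl K q y * G.Kl K r y) x :=
      pd_congr_nhds (hrad q r) p
    rw [h0, pd_mul ((G.diffAt_ψf K hKs hi).fun_mul (diffKl q)) (diffKl r),
      pd_mul (G.diffAt_ψf K hKs hi) (diffKl q)]
    ring
  have hfac1 : ∑ e, G.Γ e p q x * G.Schouten e r x
      = G.ψf K i x * (∑ e, G.Γ e p q x * G.Kl K e x) * G.Kl K r x := by
    rw [Finset.sum_congr rfl fun e _ => by rw [hrx e r]]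
    rw [Finset.mul_sum, Finset.sum_mul]
    apply Finset.sum_congr rfl; intro e _; ring
  have hfac2 : ∑ e, G.Γ e p r x * G.Schouten q e x
      = G.ψf K i x * G.Kl K q x * (∑ e, G.Γ e p r x * G.Kl K e x) := by
    rw [Finset.sum_congr rfl fun e _ => by rw [hrx q e]]
    rw [Finset.mul_sum]
    apply Finset.sum_congr rfl; intro e _; ring
  rw [hpd, hfac1, hfac2, G.pd_Kl K f hKs hray p q x, G.pd_Kl K f hKs hray p r x]
  unfold Gff
  ring

/-- Cotton factorization A_{aqr} = K_a H_{qr} at points where K♭_i ≠ 0. -/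
lemma Cotton_fac_at (hK0 : ∀ x, K x ≠ 0) (hnull : G.IsNull K) (hpr : G.PureRadiation K)
    (hKs : SmoothVF K) (hray : G.ParallelRays K f)
    {i : Fin n} {x : Pt n} (hi : G.Kl K i x ≠ 0) (a q r : Fin n) :
    G.Cotton a q r x = G.Kl K a x * G.Hf K f i q r x := by
  unfold Cotton
  rw [G.cov2_Schouten_at K f hK0 hnull hpr hKs hray hi q r a,
    G.cov2_Schouten_at K f hK0 hnull hpr hKs hray hi r q a]
  unfold Hf
  ring

/-- The Cotton-derivative part of the Bach tensor, contracted with X ⊥ K, vanishes. -/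
lemma bach_term1 (hK0 : ∀ x, K x ≠ 0) (hnull : G.IsNull K) (hpr : G.PureRadiation K)
    (hKs : SmoothVF K) (hfs : SmoothForm f) (hray : G.ParallelRays K f)
    {i : Fin n} {x : Pt n} (hi : G.Kl K i x ≠ 0) {X : Pt n}
    (hX : ∑ a, G.Kl K a x * X a = 0) (b : Fin n) :
    ∑ a, (∑ c, ∑ e, G.ginv x c e
        * G.cov3 (fun y i j k => G.Cotton i j k y) e a c b x) * X a = 0 := by
  have hiU : ∀ᶠ y in nhds x, G.Kl K i y ≠ 0 :=
    ((G.smooth_Kl K hKs i).continuous.continuousAt).eventually_ne hi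
  have hev : ∀ p q r : Fin n, (fun y => G.Cotton p q r y)
      =ᶠ[nhds x] fun y => G.Kl K p y * G.Hf K f i q r y :=
    fun p q r => hiU.mono fun y hy =>
      G.Cotton_fac_at K f hK0 hnull hpr hKs hray hy p q r
  have hfacx : ∀ p q r : Fin n, G.Cotton p q r x = G.Kl K p x * G.Hf K f i q r x :=
    fun p q r => G.Cotton_fac_at K f hK0 hnull hpr hKs hray hi p q r
  have diffKl : ∀ q : Fin n, DifferentiableAt ℝ (fun y => G.Kl K q y) x :=
    fun q => (G.smooth_Kl K hKs q).differentiable (by simp) x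
  -- the key pointwise contraction: for each e c, the a-contraction of ∇_e A_{acb} with X vanishes
  have key : ∀ e c : Fin n,
      ∑ a, G.cov3 (fun y i j k => G.Cotton i j k y) e a c b x * X a = 0 := by
    intro e c
    set REST : ℝ := pd e (G.Hf K f i c b) x
      - (∑ m, G.Γ m e c x * G.Hf K f i m b x)
      - (∑ m, G.Γ m e b x * G.Hf K f i c m x) with hREST
    have keya : ∀ a, G.cov3 (fun y i j k => G.Cotton i j k y) e a c b x
        = (f x e * G.Hf K f i c b x + REST) * G.Kl K a x := by
      intro a
      unfold cov3
      have h1 : pd e (fun y => G.Cotton a c b y) x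
          = pd e (fun y => G.Kl K a y * G.Hf K f i c b y) x := pd_congr_nhds (hev a c b) e
      have h2 : pd e (fun y => G.Kl K a y * G.Hf K f i c b y) x
          = pd e (fun y => G.Kl K a y) x * G.Hf K f i c b x
            + G.Kl K a x * pd e (G.Hf K f i c b) x :=
        pd_mul (diffKl a) (G.diffAt_Hf K f hKs hfs hi c b) e
      have h3 : ∑ m, G.Γ m e a x * G.Cotton m c b x
          = (∑ m, G.Γ m e a x * G.Kl K m x) * G.Hf K f i c b x := by
        rw [Finset.sum_mul]
        apply Finset.sum_congr rfl; intro m _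
        rw [hfacx m c b]; ring
      have h4 : ∑ m, G.Γ m e c x * G.Cotton a m b x
          = G.Kl K a x * ∑ m, G.Γ m e c x * G.Hf K f i m b x := by
        rw [Finset.mul_sum]
        apply Finset.sum_congr rfl; intro m _
        rw [hfacx a m b]; ring
      have h5 : ∑ m, G.Γ m e b x * G.Cotton a c m x
          = G.Kl K a x * ∑ m, G.Γ m e b x * G.Hf K f i c m x := by
        rw [Finset.mul_sum]
        apply Finset.sum_congr rfl; intro m _
        rw [hfacx a c m]; ring
      have h6 := G.pd_Kl K f hKs hray e a x
      simp only []
      rw [h1, h2, h3, h4, h5, hREST, h6]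
      ring
    rw [Finset.sum_congr rfl fun a _ => by rw [keya a]]
    have : ∑ a, (f x e * G.Hf K f i c b x + REST) * G.Kl K a x * X a
        = (f x e * G.Hf K f i c b x + REST) * ∑ a, G.Kl K a x * X a := by
      rw [Finset.mul_sum]
      apply Finset.sum_congr rfl; intro a _; ring
    rw [this, hX, mul_zero]
  -- now swap the contractions
  have swap : ∑ a, (∑ c, ∑ e, G.ginv x c e
        * G.cov3 (fun y i j k => G.Cotton i j k y) e a c b x) * X a
      = ∑ c, ∑ e, G.ginv x c e
        * ∑ a, G.cov3 (fun y i j k => G.Cotton i j k y) e a c b x * X a := by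
    simp only [Finset.sum_mul, Finset.mul_sum]
    rw [Finset.sum_comm]
    apply Finset.sum_congr rfl; intro c _
    rw [Finset.sum_comm]
    apply Finset.sum_congr rfl; intro e _
    apply Finset.sum_congr rfl; intro a _
    ring
  rw [swap]
  apply Finset.sum_eq_zero; intro c _
  apply Finset.sum_eq_zero; intro e _
  rw [key e c, mul_zero]

/-- The Weyl part of the Bach tensor, contracted with X ⊥ K, vanishes. -/
lemma bach_term2 (hK0 : ∀ x, K x ≠ 0) (hnull : G.IsNull K) (hpr : G.PureRadiation K)
    (hKs : SmoothVF K) (hfs : SmoothForm f) (hray : G.ParallelRays K f)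
    {i : Fin n} {x : Pt n} (hi : G.Kl K i x ≠ 0) {X : Pt n}
    (hX : ∑ a, G.Kl K a x * X a = 0) (hXip : G.ip x (K x) X = 0) (b : Fin n) :
    ∑ a, (∑ d, ∑ c, (∑ i', ∑ j, G.ginv x d i' * G.ginv x c j * G.Schouten i' j x)
        * G.Weyl d a c b x) * X a = 0 := by
  set ψ₀ : ℝ := G.ψf K i x with hψ
  have hrx : ∀ p q : Fin n, G.Schouten p q x = ψ₀ * G.Kl K p x * G.Kl K q x :=
    fun p q => G.Schouten_rad K hK0 hnull hpr x hi p q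
  have hn0 : ∑ c, G.Kl K c x * K x c = 0 := by
    rw [← G.ip_eq_sum_Kl K x (K x)]; exact hnull x
  -- the raised Schouten coefficients
  have hP : ∀ d c : Fin n, (∑ i', ∑ j, G.ginv x d i' * G.ginv x c j * G.Schouten i' j x)
      = ψ₀ * K x d * K x c := by
    intro d c
    calc ∑ i', ∑ j, G.ginv x d i' * G.ginv x c j * G.Schouten i' j x
        = ∑ i', (G.ginv x d i' * G.Kl K i' x) * (ψ₀ * ∑ j, G.ginv x c j * G.Kl K j x) := by
          apply Finset.sum_congr rfl; intro i' _
          rw [Finset.mul_sum, Finset.mul_sum]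
          apply Finset.sum_congr rfl; intro j _
          rw [hrx i' j]; ring
      _ = (∑ i', G.ginv x d i' * G.Kl K i' x) * (ψ₀ * ∑ j, G.ginv x c j * G.Kl K j x) :=
          by rw [Finset.sum_mul]
      _ = ψ₀ * K x d * K x c := by rw [G.raise_Kl K x d, G.raise_Kl K x c]; ring
  -- contraction of Schouten with K vanishes
  have hKP : ∀ p : Fin n, ∑ c, K x c * G.Schouten p c x = 0 := by
    intro p
    calc ∑ c, K x c * G.Schouten p c x
        = ∑ c, (ψ₀ * G.Kl K p x) * (G.Kl K c x * K x c) := by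
          apply Finset.sum_congr rfl; intro c _; rw [hrx p c]; ring
      _ = (ψ₀ * G.Kl K p x) * ∑ c, G.Kl K c x * K x c := by rw [Finset.mul_sum]
      _ = 0 := by rw [hn0, mul_zero]
  -- ⟨K,K⟩ = 0 in the needed index arrangement
  have hipKK : ∑ d, ∑ c, K x d * K x c * G.g x c d = 0 := by
    have h := hnull x
    unfold ip at h
    rw [Finset.sum_comm] at h
    calc ∑ d, ∑ c, K x d * K x c * G.g x c d
        = ∑ d, ∑ c, G.g x c d * K x c * K x d := by
          apply Finset.sum_congr rfl; intro d _
          apply Finset.sum_congr rfl; intro c _; ring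
      _ = 0 := h
  -- ⟨K,X⟩ = 0 in the needed index arrangement
  have hipKX : ∀ a : Fin n, ∑ c, K x c * G.g x c a = G.Kl K a x := by
    intro a
    unfold Kl
    apply Finset.sum_congr rfl; intro c _
    rw [G.symm x a c]; ring
  -- curvature contraction
  have hAd : ∀ a c : Fin n, ∑ d, K x d * G.Riem4 d a c b x
      = -((pd c (fun y => f y b) x - pd b (fun y => f y c) x) * G.Kl K a x) := by
    intro a c
    have h1 : ∀ d, G.Riem4 d a c b x = - G.Riem4 c b a d x := by
      intro d
      rw [G.Riem4_pair_symm d a c b x, G.Riem4_antisym_last c b d a x]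
    calc ∑ d, K x d * G.Riem4 d a c b x
        = - ∑ d, K x d * G.Riem4 c b a d x := by
          rw [← Finset.sum_neg_distrib]
          apply Finset.sum_congr rfl; intro d _
          rw [h1 d]; ring
      _ = - ∑ e, G.g x a e * ∑ d, G.Riem c b e d x * K x d := by
          unfold Riem4
          congr 1
          simp only [Finset.mul_sum, Finset.sum_mul]
          rw [Finset.sum_comm]
          apply Finset.sum_congr rfl; intro e _
          apply Finset.sum_congr rfl; intro d _; ring
      _ = - ∑ e, G.g x a e * ((pd c (fun y => f y b) x - pd b (fun y => f y c) x) * K x e) := by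
          congr 1
          apply Finset.sum_congr rfl; intro e _
          rw [G.RiemK K f hKs hfs hray c b e x]
      _ = -((pd c (fun y => f y b) x - pd b (fun y => f y c) x) * G.Kl K a x) := by
          unfold Kl
          rw [Finset.mul_sum]
          congr 1
          apply Finset.sum_congr rfl; intro e _; ring
  set Fc : Fin n → ℝ := fun c => pd c (fun y => f y b) x - pd b (fun y => f y c) x with hFc
  set Cw : ℝ := ∑ d, K x d * G.Schouten d b x with hCw
  set Fs : ℝ := ∑ c, K x c * Fc c with hFs
  -- the five double sums, for each fixed a
  have hA : ∀ a, ∑ d, ∑ c, K x d * K x c * G.Riem4 d a c b x = -(Fs * G.Kl K a x) := by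
    intro a
    calc ∑ d, ∑ c, K x d * K x c * G.Riem4 d a c b x
        = ∑ c, ∑ d, K x d * K x c * G.Riem4 d a c b x := Finset.sum_comm
      _ = ∑ c, K x c * ∑ d, K x d * G.Riem4 d a c b x := by
          apply Finset.sum_congr rfl; intro c _
          rw [Finset.mul_sum]
          apply Finset.sum_congr rfl; intro d _; ring
      _ = ∑ c, K x c * -(Fc c * G.Kl K a x) := by
          apply Finset.sum_congr rfl; intro c _
          rw [hAd a c]
      _ = -(Fs * G.Kl K a x) := by
          rw [hFs, Finset.sum_mul, ← Finset.sum_neg_distrib]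
          apply Finset.sum_congr rfl; intro c _; ring
  have hB : ∀ a, ∑ d, ∑ c, K x d * K x c * G.g x c d * G.Schouten a b x = 0 := by
    intro a
    simp only [← Finset.sum_mul]
    rw [hipKK, zero_mul]
  have hC : ∀ a, ∑ d, ∑ c, K x d * K x c * G.g x c a * G.Schouten d b x
      = Cw * G.Kl K a x := by
    intro a
    calc ∑ d, ∑ c, K x d * K x c * G.g x c a * G.Schouten d b x
        = ∑ d, (K x d * G.Schouten d b x) * ∑ c, K x c * G.g x c a := by
          apply Finset.sum_congr rfl; intro d _
          rw [Finset.mul_sum]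
          apply Finset.sum_congr rfl; intro c _; ring
      _ = ∑ d, (K x d * G.Schouten d b x) * G.Kl K a x := by
          apply Finset.sum_congr rfl; intro d _
          rw [hipKX a]
      _ = Cw * G.Kl K a x := by rw [hCw, Finset.sum_mul]
  have hD : ∀ a : Fin n, ∑ d, ∑ c, K x d * K x c * G.g x b a * G.Schouten d c x = 0 := by
    intro a
    apply Finset.sum_eq_zero; intro d _
    calc ∑ c, K x d * K x c * G.g x b a * G.Schouten d c x
        = (K x d * G.g x b a) * ∑ c, K x c * G.Schouten d c x := by
          rw [Finset.mul_sum]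
          apply Finset.sum_congr rfl; intro c _; ring
      _ = 0 := by rw [hKP d, mul_zero]
  have hE : ∀ a : Fin n, ∑ d, ∑ c, K x d * K x c * G.g x b d * G.Schouten a c x = 0 := by
    intro a
    apply Finset.sum_eq_zero; intro d _
    calc ∑ c, K x d * K x c * G.g x b d * G.Schouten a c x
        = (K x d * G.g x b d) * ∑ c, K x c * G.Schouten a c x := by
          rw [Finset.mul_sum]
          apply Finset.sum_congr rfl; intro c _; ring
      _ = 0 := by rw [hKP a, mul_zero]
  -- expansion of the Weyl contraction for each fixed a
  have hinner : ∀ a : Fin n,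
      ∑ d, ∑ c, (∑ i', ∑ j, G.ginv x d i' * G.ginv x c j * G.Schouten i' j x)
        * G.Weyl d a c b x
      = (ψ₀ * (Cw - Fs)) * G.Kl K a x := by
    intro a
    have step : ∀ d c : Fin n,
        (∑ i', ∑ j, G.ginv x d i' * G.ginv x c j * G.Schouten i' j x) * G.Weyl d a c b x
        = ψ₀ * (K x d * K x c * G.Riem4 d a c b x
            - K x d * K x c * G.g x c d * G.Schouten a b x
            + K x d * K x c * G.g x c a * G.Schouten d b x
            - K x d * K x c * G.g x b a * G.Schouten d c x
            + K x d * K x c * G.g x b d * G.Schouten a c x) := by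
      intro d c
      rw [hP d c]
      unfold Weyl
      ring
    calc ∑ d, ∑ c, (∑ i', ∑ j, G.ginv x d i' * G.ginv x c j * G.Schouten i' j x)
          * G.Weyl d a c b x
        = ψ₀ * ∑ d, ∑ c, (K x d * K x c * G.Riem4 d a c b x
            - K x d * K x c * G.g x c d * G.Schouten a b x
            + K x d * K x c * G.g x c a * G.Schouten d b x
            - K x d * K x c * G.g x b a * G.Schouten d c x
            + K x d * K x c * G.g x b d * G.Schouten a c x) := by
          rw [Finset.mul_sum]
          apply Finset.sum_congr rfl; intro d _
          rw [Finset.mul_sum]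
          apply Finset.sum_congr rfl; intro c _
          exact step d c
      _ = ψ₀ * ((∑ d, ∑ c, K x d * K x c * G.Riem4 d a c b x)
            - (∑ d, ∑ c, K x d * K x c * G.g x c d * G.Schouten a b x)
            + (∑ d, ∑ c, K x d * K x c * G.g x c a * G.Schouten d b x)
            - (∑ d, ∑ c, K x d * K x c * G.g x b a * G.Schouten d c x)
            + (∑ d, ∑ c, K x d * K x c * G.g x b d * G.Schouten a c x)) := by
          congr 1
          simp only [Finset.sum_add_distrib, Finset.sum_sub_distrib]
      _ = (ψ₀ * (Cw - Fs)) * G.Kl K a x := by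
          rw [hA a, hB a, hC a, hD a, hE a]
          ring
  rw [Finset.sum_congr rfl fun a _ => by rw [hinner a]]
  calc ∑ a, (ψ₀ * (Cw - Fs)) * G.Kl K a x * X a
      = (ψ₀ * (Cw - Fs)) * ∑ a, G.Kl K a x * X a := by
        rw [Finset.mul_sum]
        apply Finset.sum_congr rfl; intro a _; ring
    _ = 0 := by rw [hX, mul_zero]

end WithK

end MetricG

/-- Bach condition for aligned pure radiation: If g is a pure radiation
metric with parallel rays spanned by K, then the Bach tensor
B_{ab} = ∇^c A_{acb} + P^{dc} C_{dacb} satisfies B_{ab} X^a = 0 for every X orthogonal to K. -/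
theorem stmt_8 {n : ℕ} (hn : 4 ≤ n) (G : MetricG n) (K : Pt n → Pt n) (f : Pt n → Fin n → ℝ)
    (hKs : SmoothVF K) (hfs : SmoothForm f) (hK0 : ∀ x, K x ≠ 0) (hnull : G.IsNull K)
    (hpr : G.PureRadiation K) (hray : G.ParallelRays K f) :
    ∀ x (X : Pt n), G.ip x (K x) X = 0 → ∀ b,
      (∑ a, G.Bach a b x * X a) = 0 := by
  intro x X hXip b
  obtain ⟨i, hi⟩ := G.Kl_ne_zero K hK0 x
  have hX : ∑ a, G.Kl K a x * X a = 0 := by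
    rw [← G.ip_eq_sum_Kl K x X]; exact hXip
  have h1 := G.bach_term1 K f hK0 hnull hpr hKs hfs hray hi hX b
  have h2 := G.bach_term2 K f hK0 hnull hpr hKs hfs hray hi hX hXip b
  unfold MetricG.Bach
  simp only [add_mul, Finset.sum_add_distrib]
  rw [h1, h2, add_zero]
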